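/- arXiv:1103.3930 — 2 statements merged into one kernel-verified Lean document; each statement's English description precedes it below -/
import Mathlib

section
/- Let b₀, b₁, b₂, b₃ be integers and set a₀ = b₀, a₁ = b₁ − 2b₀, a₂ = b₂ − 2b₁ + 3b₀, a₃ = b₃ − 2b₂ + 3b₁ − 4b₀. With c^{(3)}_t = (1 − t)^{−b₃} (1 − 2t)^{b₂} (1 − 3t)^{−b₁} (1 − 4t)^{b₀} in ℚ⟦t⟧ and c_i^{(3)} its t^i-coefficient, one has 6·c₃^{(3)} = a₃³ + 6(a₁a₃ − a₀a₃ − a₂a₃) + 3a₃² − 36a₀ + 24a₁ − 12a₂ + 2a₃. -/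
/-!
For every integer `n`, `(1 - k t)^n` is the binomial series `(1 + X)^n` rescaled by `X ↦ -k X`,
so its `t^i`-coefficient is `(-k)^i * choose n i`, also for negative `n`. Hence the
`t^3`-coefficient of `c^{(3)}_t` is an explicit cubic polynomial in `b₀, …, b₃`, and the identity
becomes a polynomial identity after substituting the `a_i`.
-/

open PowerSeries

namespace PowerSeries

variable {A : Type*} [CommRing A]

theorem val_zpow_eq_rescale_binomialSeries (k : A) (v : A⟦X⟧ˣ)
    (hv : (v : A⟦X⟧) = 1 - C k * X) (n : ℤ) :
    ((v ^ n : A⟦X⟧ˣ) : A⟦X⟧) = rescale (-k) (binomialSeries A n) := by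
  have hstep (m : ℤ) : rescale (-k) (binomialSeries A (m + 1)) =
      rescale (-k) (binomialSeries A m) * v := by
    rw [binomialSeries_add, map_mul, hv, ← Nat.cast_one, binomialSeries_nat]
    simp [rescale_X, sub_eq_add_neg]
  induction n using Int.induction_on with
  | zero => simp
  | succ m ih => rw [zpow_add_one, Units.val_mul, ih, hstep]
  | pred m ih =>
    rw [← Units.mul_left_inj v, ← hstep, ← Units.val_mul, ← zpow_add_one, sub_add_cancel, ih]

theorem coeff_val_zpow (k : A) (v : A⟦X⟧ˣ) (hv : (v : A⟦X⟧) = 1 - C k * X) (n : ℤ) (i : ℕ) :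
    coeff i ((v ^ n : A⟦X⟧ˣ) : A⟦X⟧) = (-k) ^ i * (Ring.choose n i : ℤ) := by
  simp [val_zpow_eq_rescale_binomialSeries k v hv, coeff_rescale]

end PowerSeries

namespace Ring

open Polynomial

variable {K : Type*} [Field K] [CharZero K]

theorem intCast_choose (n : ℤ) (i : ℕ) : ((choose n i : ℤ) : K) = choose (n : K) i :=
  map_choose (Int.castRingHom K) n i

theorem choose_two (r : K) : choose r 2 = r * (r - 1) / 2 := by
  simp only [choose_eq_smul, descPochhammer_succ_right, descPochhammer_zero, smeval_mul,
    smeval_sub, smeval_X, smeval_natCast, smeval_one]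
  simp [Nat.factorial]
  ring

theorem choose_three (r : K) : choose r 3 = r * (r - 1) * (r - 2) / 6 := by
  simp only [choose_eq_smul, descPochhammer_succ_right, descPochhammer_zero, smeval_mul,
    smeval_sub, smeval_X, smeval_natCast, smeval_one]
  simp [Nat.factorial]
  ring

end Ring

theorem stmt12 (b0 b1 b2 b3 a0 a1 a2 a3 : ℤ)
    (ha0 : a0 = b0) (ha1 : a1 = b1 - 2 * b0) (ha2 : a2 = b2 - 2 * b1 + 3 * b0)
    (ha3 : a3 = b3 - 2 * b2 + 3 * b1 - 4 * b0)
    (u : ℕ → (PowerSeries ℚ)ˣ)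
    (hu : ∀ k, (u k : PowerSeries ℚ) = 1 - PowerSeries.C (k : ℚ) * PowerSeries.X)
    (c : PowerSeries ℚ)
    (hc : c = ((u 1 ^ (-b3) * u 2 ^ b2 * u 3 ^ (-b1) * u 4 ^ b0 :
      (PowerSeries ℚ)ˣ) : PowerSeries ℚ)) :
    6 * (PowerSeries.coeff 3) c =
      ((a3 ^ 3 + 6 * (a1 * a3 - a0 * a3 - a2 * a3) + 3 * a3 ^ 2
          - 36 * a0 + 24 * a1 - 12 * a2 + 2 * a3 : ℤ) : ℚ) := by
  rw [hc, ha0, ha1, ha2, ha3]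
  simp only [Units.val_mul, coeff_mul, Finset.Nat.sum_antidiagonal_eq_sum_range_succ_mk,
    Finset.sum_range_succ, Finset.sum_range_zero, zero_add, Nat.reduceSub]
  simp only [coeff_val_zpow _ _ (hu _), Ring.intCast_choose, Ring.choose_zero_right,
    Ring.choose_one_right, Ring.choose_two, Ring.choose_three]
  push_cast
  ring
end

section
/- For every integer j ≥ 1, the coefficient of t² in the formal power series ∏_{k=1}^{j+1} (1 − kt)^{(−1)^k \binom{j+2}{j+1−k}} ∈ ℚ⟦t⟧ (negative exponents denoting inverses of the units (1 − kt)) is equal to zero. -/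
/-!
Write `e k` for the exponent of `1 - kt` and `p m = ∑ e k * k ^ m` for the weighted power sums.
The first two coefficients of the logarithm of the product are additive, so they are `-p 1` and
`-p 2 / 2`, and the coefficient of `t²` is `(p 1 ^ 2 - p 2) / 2`. Up to reindexing `p m` is an
alternating binomial sum of the polynomial `(x - j - 1) ^ m`, i.e. its `(j + 2)`-th forward
difference, which vanishes for `m < j + 2`; the two boundary terms left over give `p m = (-1) ^ m`,
hence `p 1 ^ 2 = p 2 = 1`.
-/

open Finset PowerSeries

section AlternatingBinomialSums

variable {R : Type*} [CommRing R]

theorem sum_range_neg_one_pow_mul_choose_mul_pow_eq_zero {n m : ℕ} (h : m < n) (y : R) :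
    ∑ i ∈ range (n + 1), (-1 : R) ^ (n - i) * n.choose i * (y + i) ^ m = 0 := by
  have := congr_fun (fwdDiff_iter_pow_eq_zero_of_lt (R := R) h) y
  rw [fwdDiff_iter_eq_sum_shift] at this
  simpa [zsmul_eq_mul] using this

theorem sum_Icc_neg_one_pow_mul_choose_mul_pow {j m : ℕ} (hm : m ≠ 0) (hmj : m ≤ j + 1) :
    ∑ k ∈ Icc 1 (j + 1), (-1 : R) ^ k * (j + 2).choose (j + 1 - k) * (k : R) ^ m =
      (-1) ^ m := by
  have h := sum_range_neg_one_pow_mul_choose_mul_pow_eq_zero (R := R) (n := j + 2)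
    (Nat.lt_succ_of_le hmj) (-(j + 1 : R))
  rw [sum_range_succ, ← sum_range_reflect] at h
  have hreflect : ∀ k ∈ range (j + 2),
      (-1 : R) ^ (j + 2 - (j + 2 - 1 - k)) * (j + 2).choose (j + 2 - 1 - k) *
          (-(j + 1 : R) + ((j + 2 - 1 - k : ℕ) : R)) ^ m =
        (-1) ^ (m + 1) * ((-1 : R) ^ k * (j + 2).choose (j + 1 - k) * (k : R) ^ m) := by
    intro k hk
    have hk : k ≤ j + 1 := Nat.le_of_lt_succ (mem_range.mp hk)
    rw [show j + 2 - (j + 2 - 1 - k) = k + 1 by omega, show j + 2 - 1 - k = j + 1 - k by omega,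
      Nat.cast_sub hk]
    push_cast
    rw [show -((j : R) + 1) + ((j : R) + 1 - k) = -1 * k by ring, mul_pow]
    ring
  have hrange : range (j + 2) = insert 0 (Icc 1 (j + 1)) := by ext; simp; omega
  rw [sum_congr rfl hreflect, ← mul_sum, hrange, sum_insert (by simp)] at h
  set S := ∑ k ∈ Icc 1 (j + 1), (-1 : R) ^ k * (j + 2).choose (j + 1 - k) * (k : R) ^ m
  have hsq : (-1 : R) ^ m * (-1) ^ m = 1 := by rw [← mul_pow]; norm_num
  norm_num [hm] at h
  linear_combination (-(-1 : R) ^ m) * h - S * hsq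

end AlternatingBinomialSums

noncomputable section

namespace PowerSeries

variable {R : Type*} [CommRing R]

/-- When `constantCoeff f = 1`, these are the coefficients of `X` and `2 X ^ 2` in `log f`;
hence `logJet` turns products into sums. -/
def logJet (f : R⟦X⟧) : R × R := (coeff 1 f, 2 * coeff 2 f - coeff 1 f ^ 2)

theorem logJet_one : logJet (1 : R⟦X⟧) = 0 := by
  simp [logJet, coeff_one]

theorem logJet_mul {f g : R⟦X⟧} (hf : constantCoeff f = 1) (hg : constantCoeff g = 1) :
    logJet (f * g) = logJet f + logJet g := by
  ext <;>
    simp [logJet, coeff_mul, Nat.sum_antidiagonal_eq_sum_range_succ_mk, sum_range_succ, hf, hg] <;>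
    ring

theorem logJet_one_sub_C_mul_X (c : R) : logJet (1 - C c * X) = (-c, -c ^ 2) := by
  simp [logJet, coeff_one]

def unitsConstantCoeffOne : Subgroup R⟦X⟧ˣ :=
  (Units.map (constantCoeff : R⟦X⟧ →+* R).toMonoidHom).ker

theorem mem_unitsConstantCoeffOne {u : R⟦X⟧ˣ} :
    u ∈ unitsConstantCoeffOne ↔ constantCoeff (u : R⟦X⟧) = 1 := by
  simp [unitsConstantCoeffOne, Units.ext_iff]

def logJetHom : unitsConstantCoeffOne (R := R) →* Multiplicative (R × R) where
  toFun u := Multiplicative.ofAdd (logJet ((u : R⟦X⟧ˣ) : R⟦X⟧))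
  map_one' := by simp [logJet_one]
  map_mul' u v := by
    simp [logJet_mul (mem_unitsConstantCoeffOne.mp u.2) (mem_unitsConstantCoeffOne.mp v.2)]

theorem logJet_prod_zpow {ι : Type*} (s : Finset ι) (u : ι → R⟦X⟧ˣ)
    (hu : ∀ i, constantCoeff (u i : R⟦X⟧) = 1) (e : ι → ℤ) :
    logJet ((∏ i ∈ s, u i ^ e i : R⟦X⟧ˣ) : R⟦X⟧) = ∑ i ∈ s, e i • logJet (u i : R⟦X⟧) := by
  let v : ι → unitsConstantCoeffOne (R := R) :=
    fun i => ⟨u i, mem_unitsConstantCoeffOne.mpr (hu i)⟩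
  have hv : ∏ i ∈ s, u i ^ e i =
      ((∏ i ∈ s, v i ^ e i : unitsConstantCoeffOne (R := R)) : R⟦X⟧ˣ) := by
    simp [v]
  rw [hv]
  calc logJet (((∏ i ∈ s, v i ^ e i : unitsConstantCoeffOne (R := R)) : R⟦X⟧ˣ) : R⟦X⟧)
      = (logJetHom (∏ i ∈ s, v i ^ e i)).toAdd := rfl
    _ = ∑ i ∈ s, e i • (logJetHom (v i)).toAdd := by
      rw [map_prod, toAdd_prod]
      simp only [map_zpow, toAdd_zpow]

end PowerSeries

end

theorem stmt16 (j : ℕ) (hj : 1 ≤ j)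
    (u : ℕ → (PowerSeries ℚ)ˣ)
    (hu : ∀ k, (u k : PowerSeries ℚ) = 1 - PowerSeries.C (k : ℚ) * PowerSeries.X) :
    (PowerSeries.coeff 2)
      ((↑(∏ k ∈ Finset.Icc 1 (j + 1),
          u k ^ ((-1 : ℤ) ^ k * ((j + 2).choose (j + 1 - k) : ℤ))) : PowerSeries ℚ)) = 0 := by
  have hmoment : ∀ m, m ≠ 0 → m ≤ j + 1 → ∑ k ∈ Icc 1 (j + 1),
      ((-1 : ℤ) ^ k * ((j + 2).choose (j + 1 - k) : ℤ)) • (k : ℚ) ^ m = (-1) ^ m := by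
    intro m hm hmj
    simp only [zsmul_eq_mul]
    push_cast
    exact sum_Icc_neg_one_pow_mul_choose_mul_pow hm hmj
  have hp1 := hmoment 1 one_ne_zero (by omega)
  simp only [pow_one] at hp1
  have h := logJet_prod_zpow (Icc 1 (j + 1)) u (fun k => by simp [hu])
    (fun k => (-1 : ℤ) ^ k * ((j + 2).choose (j + 1 - k) : ℤ))
  simp only [hu, logJet_one_sub_C_mul_X] at h
  obtain ⟨h1, h2⟩ := Prod.ext_iff.mp h
  simp only [logJet, Prod.fst_sum, Prod.snd_sum, Prod.smul_fst, Prod.smul_snd, smul_neg,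
    sum_neg_distrib, hp1, hmoment 2 two_ne_zero (by omega)] at h1 h2
  rw [h1] at h2
  linear_combination h2 / 2
end
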